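/- Let k ≥ 2 and let A = A_k ⋯ A_1 be a factorization of a contraction A into contractions A_i : H_i → H_{i+1}. Then the following are equivalent: (i) the factorization A = A_k ⋯ A_1 is k-regular; (ii) the two-factor factorization A = A_k ∘ (A_{k−1} ⋯ A_1) is 2-regular and the factorization A_{k−1} ⋯ A_1 (of the contraction A_{k−1} ⋯ A_1) is (k−1)-regular; (iii) the two-factor factorization A = (A_k ⋯ A_2) ∘ A_1 is 2-regular and the factorization A_k ⋯ A_2 is (k−1)-regular. -/

import Mathlib

noncomputable section

open ContinuousLinearMap

/-- The defect operator `D_A = (I - A*A)^{1/2}` of a contraction `A`. -/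
def defectOp {E F : Type*} [NormedAddCommGroup E] [InnerProductSpace ℂ E]
    [CompleteSpace E] [NormedAddCommGroup F] [InnerProductSpace ℂ F] [CompleteSpace F]
    (A : E →L[ℂ] F) : E →L[ℂ] E :=
  CFC.sqrt (1 - (adjoint A).comp A)

/-- The defect space `𝒟_A`, the closure of the range of the defect operator. -/
def defectSpace {E F : Type*} [NormedAddCommGroup E] [InnerProductSpace ℂ E]
    [CompleteSpace E] [NormedAddCommGroup F] [InnerProductSpace ℂ F] [CompleteSpace F]
    (A : E →L[ℂ] F) : Submodule ℂ E :=
  (LinearMap.range (defectOp A : E →ₗ[ℂ] E)).topologicalClosure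

theorem defectOp_mem {E F : Type*} [NormedAddCommGroup E] [InnerProductSpace ℂ E]
    [CompleteSpace E] [NormedAddCommGroup F] [InnerProductSpace ℂ F] [CompleteSpace F]
    (A : E →L[ℂ] F) (x : E) : defectOp A x ∈ defectSpace A :=
  Submodule.le_topologicalClosure _ (LinearMap.mem_range_self _ x)

variable {H : ℕ → Type*} [∀ n, NormedAddCommGroup (H n)] [∀ n, InnerProductSpace ℂ (H n)]
  [∀ n, CompleteSpace (H n)]

/-- The product `A_{a+l-1} ⋯ A_{a+1} A_a : H a → H (a+l)` of a chain of operators. -/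
def prodLen (A : ∀ n, H n →L[ℂ] H (n + 1)) (a : ℕ) : ∀ l : ℕ, H a →L[ℂ] H (a + l)
  | 0 => ContinuousLinearMap.id ℂ (H a)
  | l + 1 => (A (a + l)).comp (prodLen A a l)

/-- The product `A_{b-1} ⋯ A_{a+1} A_a : H a → H b` (junk value `0` if `b < a`). -/
def prodSeg (A : ∀ n, H n →L[ℂ] H (n + 1)) (a b : ℕ) : H a →L[ℂ] H b :=
  if h : a ≤ b then (Nat.add_sub_cancel' h ▸ prodLen A a (b - a)) else 0

/-- The tuple `(D_{A_k} A_{k-1} ⋯ A_1 h, …, D_{A_2} A_1 h, D_{A_1} h)` (with zero-based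
indexing: component `i` is `D_{A i} (A_{i-1} ⋯ A_0 h)`), viewed as an element of the
Hilbert (ℓ²) direct sum of the defect spaces. -/
def defectTuple (A : ∀ n, H n →L[ℂ] H (n + 1)) (k : ℕ) (h : H 0) :
    PiLp 2 (fun i : Fin k => ↥(defectSpace (A i))) :=
  WithLp.toLp 2 (fun i => ⟨defectOp (A i) (prodSeg A 0 i h), defectOp_mem _ _⟩)

/-- The factorization `A = A_{k-1} ⋯ A_0` is `k`-regular if the set of defect tuples is dense
in the Hilbert direct sum of the defect spaces. -/
def IsRegularFactorization (A : ∀ n, H n →L[ℂ] H (n + 1)) (k : ℕ) : Prop :=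
  Dense (Set.range (defectTuple A k))

/-- A two-factor factorization `A = B ∘ C` is `2`-regular if
`{ D_B (C h) ⊕ D_C h : h }` is dense in `𝒟_B ⊕ 𝒟_C`. -/
def IsRegularPair {E F G : Type*} [NormedAddCommGroup E] [InnerProductSpace ℂ E]
    [CompleteSpace E] [NormedAddCommGroup F] [InnerProductSpace ℂ F] [CompleteSpace F]
    [NormedAddCommGroup G] [InnerProductSpace ℂ G] [CompleteSpace G]
    (B : F →L[ℂ] G) (C : E →L[ℂ] F) : Prop :=
  Dense (Set.range fun h : E =>
    ((WithLp.equiv 2 (↥(defectSpace B) × ↥(defectSpace C))).symm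
      (⟨defectOp B (C h), defectOp_mem _ _⟩, ⟨defectOp C h, defectOp_mem _ _⟩)))

end

/-!
Telescoping `‖D_{A_i} x‖² = ‖x‖² - ‖A_i x‖²` along the chain shows that the defect tuple of
`A_{k-1} ⋯ A_1` at `h` has the same norm as `D_P h`, where `P = A_{k-1} ⋯ A_1`. Hence
`D_P h ↦ (defect tuple of h)` extends by continuity to an isometry `V` from `𝒟_P` into
`𝒟_{A_{k-1}} ⊕ ⋯ ⊕ 𝒟_{A_1}`, whose range is dense exactly when `A_{k-1} ⋯ A_1` is regular, and
`id ⊕ V` maps `{D_{A_k} P h ⊕ D_P h}` onto the set of `k`-tuples. So the `k`-tuples are dense iff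
`A_k ∘ P` is `2`-regular and `V` has dense range. Splitting off `A_1` instead of `A_k` gives (iii).
-/

open ContinuousLinearMap
open scoped ComplexInnerProductSpace ENNReal

noncomputable section

theorem Homeomorph.denseRange_comp_iff {α X Y : Type*} [TopologicalSpace X] [TopologicalSpace Y]
    (e : X ≃ₜ Y) {F : α → X} : DenseRange (e ∘ F) ↔ DenseRange F := by
  rw [DenseRange, DenseRange, Set.range_comp, e.isDenseEmbedding.dense_image]

section PiLpSplit

variable (p : ℝ≥0∞) {m : ℕ} (D : Fin (m + 1) → Type*) [∀ i, TopologicalSpace (D i)]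

def PiLp.snocHomeomorph :
    PiLp p D ≃ₜ D (Fin.last m) × PiLp p (fun j : Fin m => D j.castSucc) where
  toFun x := (x (Fin.last m), WithLp.toLp p fun j => x j.castSucc)
  invFun y := WithLp.toLp p (Fin.snoc (α := D) y.2.ofLp y.1)
  left_inv x := by ext i; refine Fin.lastCases ?_ (fun j => ?_) i <;> simp
  right_inv y := by ext <;> simp
  continuous_toFun := by fun_prop
  continuous_invFun := by fun_prop

def PiLp.consHomeomorph : PiLp p D ≃ₜ D 0 × PiLp p (fun j : Fin m => D j.succ) where
  toFun x := (x 0, WithLp.toLp p fun j => x j.succ)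
  invFun y := WithLp.toLp p (Fin.cons (α := D) y.1 y.2.ofLp)
  left_inv x := by ext i; refine Fin.cases ?_ (fun j => ?_) i <;> simp
  right_inv y := by ext <;> simp
  continuous_toFun := by fun_prop
  continuous_invFun := by fun_prop

end PiLpSplit

section DenseRangePair

variable {𝕜 X Y K₁ K₂ K₃ : Type*} [NontriviallyNormedField 𝕜] [AddCommGroup Y] [Module 𝕜 Y]
  [TopologicalSpace K₁] [NormedAddCommGroup K₂] [NormedSpace 𝕜 K₂]
  [NormedAddCommGroup K₃] [NormedSpace 𝕜 K₃] {f : X → K₁} {c : X → Y} {g : Y →ₗ[𝕜] K₂}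
  {u : Y →ₗ[𝕜] K₃}

theorem DenseRange.prod_comp_of_norm_le [CompleteSpace K₃]
    (h : DenseRange fun x => (f x, g (c x))) (hg : DenseRange g) (hu : DenseRange u) (C : ℝ)
    (hle : ∀ y, ‖u y‖ ≤ C * ‖g y‖) : DenseRange fun x => (f x, u (c x)) := by
  set V := u.extendOfNorm g
  have hV : ∀ y, V (g y) = u y := LinearMap.extendOfNorm_eq hg ⟨C, hle⟩
  have hVdense : DenseRange V := Dense.mono (by rintro _ ⟨y, rfl⟩; exact ⟨g y, hV y⟩) hu
  have hfactor : (fun x => (f x, u (c x))) = Prod.map id V ∘ fun x => (f x, g (c x)) := by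
    funext x; simp [hV]
  rw [hfactor]
  exact (denseRange_id.prodMap hVdense).comp h (continuous_id.prodMap V.continuous)

theorem denseRange_prod_comp_iff [Nonempty K₁] [CompleteSpace K₂] [CompleteSpace K₃]
    (hg : DenseRange g) (hnorm : ∀ y, ‖u y‖ = ‖g y‖) :
    (DenseRange fun x => (f x, u (c x))) ↔
      (DenseRange fun x => (f x, g (c x))) ∧ DenseRange u := by
  refine ⟨fun h => ?_, fun ⟨h, hu⟩ => h.prod_comp_of_norm_le hg hu 1 (by simp [hnorm])⟩
  have hu : DenseRange u :=
    Dense.mono (by rintro _ ⟨x, rfl⟩; exact ⟨c x, rfl⟩)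
      (Prod.snd_surjective.denseRange.comp h continuous_snd)
  exact ⟨h.prod_comp_of_norm_le hu hg 1 (by simp [hnorm]), hu⟩

end DenseRangePair

section Defect

variable {E F G : Type*} [NormedAddCommGroup E] [InnerProductSpace ℂ E] [CompleteSpace E]
  [NormedAddCommGroup F] [InnerProductSpace ℂ F] [CompleteSpace F]
  [NormedAddCommGroup G] [InnerProductSpace ℂ G] [CompleteSpace G] {A : E →L[ℂ] F}

theorem one_sub_adjoint_comp_self_nonneg (hA : ‖A‖ ≤ 1) : 0 ≤ 1 - (adjoint A).comp A := by
  rw [sub_nonneg, ← CStarAlgebra.norm_le_one_iff_of_nonneg _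
    ((nonneg_iff_isPositive _).2 (isPositive_adjoint_comp_self A)), norm_adjoint_comp_self]
  nlinarith [norm_nonneg A]

theorem norm_defectOp_apply_sq (hA : ‖A‖ ≤ 1) (x : E) :
    ‖defectOp A x‖ ^ 2 = ‖x‖ ^ 2 - ‖A x‖ ^ 2 := by
  have hD : IsSelfAdjoint (defectOp A) := .of_nonneg (CFC.sqrt_nonneg _)
  rw [apply_norm_sq_eq_inner_adjoint_left, ← star_eq_adjoint, hD.star_eq, ← mul_def, defectOp,
    CFC.sqrt_mul_sqrt_self _ (one_sub_adjoint_comp_self_nonneg hA), sub_apply, inner_sub_left,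
    map_sub, one_apply_eq_self, ← apply_norm_sq_eq_inner_adjoint_left, inner_self_eq_norm_sq]

instance : CompleteSpace (defectSpace A) :=
  (Submodule.isClosed_topologicalClosure _).completeSpace_coe

variable (A) in
def defectMap : E →L[ℂ] defectSpace A :=
  (defectOp A).codRestrict (defectSpace A) (defectOp_mem A)

theorem denseRange_defectMap : DenseRange (defectMap A) := by
  rw [DenseRange, Topology.IsInducing.subtypeVal.dense_iff]
  rintro ⟨x, hx⟩
  rw [← Set.range_comp]
  exact hx

theorem isRegularPair_iff_denseRange (B : F →L[ℂ] G) (C : E →L[ℂ] F) :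
    IsRegularPair B C ↔ DenseRange fun h => (defectMap B (C h), defectMap C h) :=
  (WithLp.homeomorphProd 2 _ _).symm.denseRange_comp_iff

end Defect

section Chain

variable {H : ℕ → Type*} [∀ n, NormedAddCommGroup (H n)] [∀ n, InnerProductSpace ℂ (H n)]
  (A : ∀ n, H n →L[ℂ] H (n + 1))

theorem prodSeg_add (a l : ℕ) : prodSeg A a (a + l) = prodLen A a l := by
  have hcast : ∀ n (e : a + n = a + l),
      (e ▸ prodLen A a n : H a →L[ℂ] H (a + l)) = prodLen A a l := by
    rintro n e
    obtain rfl : n = l := by omega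
    rfl
  rw [prodSeg, dif_pos (Nat.le_add_right a l)]
  exact hcast _ _

theorem prodSeg_self (a : ℕ) : prodSeg A a a = ContinuousLinearMap.id ℂ (H a) :=
  prodSeg_add A a 0

theorem prodSeg_succ {a b : ℕ} (h : a ≤ b) :
    prodSeg A a (b + 1) = (A b).comp (prodSeg A a b) := by
  obtain ⟨l, rfl⟩ := Nat.exists_eq_add_of_le h
  rw [prodSeg_add]
  exact (prodSeg_add A a (l + 1)).trans (by rw [prodLen])

theorem prodSeg_shift (j : ℕ) :
    prodSeg (H := fun n => H (n + 1)) (fun n => A (n + 1)) 0 j = prodSeg A 1 (j + 1) := by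
  induction j with
  | zero => rw [prodSeg_self, prodSeg_self]
  | succ j ih => rw [prodSeg_succ _ j.zero_le, prodSeg_succ A (by omega : 1 ≤ j + 1), ih]

theorem prodSeg_zero_succ (j : ℕ) :
    prodSeg A 0 (j + 1) = (prodSeg A 1 (j + 1)).comp (A 0) := by
  induction j with
  | zero => rw [prodSeg_succ A le_rfl, prodSeg_self, prodSeg_self]; rfl
  | succ j ih =>
    rw [prodSeg_succ A (j + 1).zero_le, prodSeg_succ A (by omega : 1 ≤ j + 1), ih]; rfl

theorem norm_prodSeg_le_one {m : ℕ} (hA : ∀ j < m, ‖A j‖ ≤ 1) : ‖prodSeg A 0 m‖ ≤ 1 := by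
  induction m with
  | zero => rw [prodSeg_self]; exact norm_id_le
  | succ m ih =>
    rw [prodSeg_succ A m.zero_le]
    exact (opNorm_comp_le _ _).trans
      (mul_le_one₀ (hA m m.lt_succ_self) (norm_nonneg _) (ih fun j hj => hA j (by omega)))

variable [∀ n, CompleteSpace (H n)]

def defectTupleₗ (k : ℕ) : H 0 →ₗ[ℂ] PiLp 2 (fun i : Fin k => defectSpace (A i)) where
  toFun := defectTuple A k
  map_add' h h' := by ext i; simp [defectTuple]
  map_smul' c h := by ext i; simp [defectTuple]

theorem norm_defectTuple_sq {m : ℕ} (hA : ∀ j < m, ‖A j‖ ≤ 1) (h : H 0) :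
    ‖defectTuple A m h‖ ^ 2 = ‖h‖ ^ 2 - ‖prodSeg A 0 m h‖ ^ 2 := by
  induction m with
  | zero => simp [prodSeg_self, Subsingleton.elim (defectTuple A 0 h) 0]
  | succ m ih =>
    have hinit : ∑ j : Fin m, ‖defectTuple A (m + 1) h j.castSucc‖ ^ 2 =
        ‖defectTuple A m h‖ ^ 2 := by
      rw [PiLp.norm_sq_eq_of_L2]; rfl
    have hlast : ‖defectTuple A (m + 1) h (Fin.last m)‖ =
        ‖defectOp (A m) (prodSeg A 0 m h)‖ := rfl
    rw [PiLp.norm_sq_eq_of_L2, Fin.sum_univ_castSucc, hinit, hlast,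
      ih fun j hj => hA j (by omega), norm_defectOp_apply_sq (hA m m.lt_succ_self),
      prodSeg_succ A m.zero_le, comp_apply]
    ring

theorem norm_defectTuple {m : ℕ} (hA : ∀ j < m, ‖A j‖ ≤ 1) (h : H 0) :
    ‖defectTuple A m h‖ = ‖defectOp (prodSeg A 0 m) h‖ := by
  rw [← sq_eq_sq₀ (norm_nonneg _) (norm_nonneg _), norm_defectTuple_sq A hA,
    norm_defectOp_apply_sq (norm_prodSeg_le_one A hA)]

theorem isRegularFactorization_succ_iff_last {m : ℕ} (hA : ∀ j < m + 1, ‖A j‖ ≤ 1) :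
    IsRegularFactorization A (m + 1) ↔
      IsRegularPair (A m) (prodSeg A 0 m) ∧ IsRegularFactorization A m := by
  rw [isRegularPair_iff_denseRange]
  refine (PiLp.snocHomeomorph 2 _).denseRange_comp_iff.symm.trans ?_
  exact denseRange_prod_comp_iff (c := id) (f := fun h => defectMap (A m) (prodSeg A 0 m h))
    (u := defectTupleₗ A m) denseRange_defectMap
    (norm_defectTuple A fun j hj => hA j (by omega))

theorem isRegularFactorization_succ_iff_first {m : ℕ} (hA : ∀ j < m + 1, ‖A j‖ ≤ 1) :
    IsRegularFactorization A (m + 1) ↔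
      IsRegularPair (prodSeg A 1 (m + 1)) (A 0) ∧
        IsRegularFactorization (H := fun n => H (n + 1)) (fun n => A (n + 1)) m := by
  have hsplit : PiLp.consHomeomorph 2 _ ∘ defectTuple A (m + 1) = fun h =>
      (defectMap (A 0) h,
        defectTupleₗ (H := fun n => H (n + 1)) (fun n => A (n + 1)) m (A 0 h)) := by
    funext h
    refine Prod.ext (Subtype.ext ?_) (PiLp.ext fun j => Subtype.ext ?_)
    · show defectOp (A 0) (prodSeg A 0 0 h) = defectOp (A 0) h
      rw [prodSeg_self, id_apply]
    · show defectOp (A (j + 1)) (prodSeg A 0 (j + 1) h) =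
        defectOp (A (j + 1)) (prodSeg (H := fun n => H (n + 1)) (fun n => A (n + 1)) 0 j (A 0 h))
      rw [prodSeg_zero_succ, prodSeg_shift, comp_apply]
  have hnorm (y : H 1) : ‖defectTupleₗ (H := fun n => H (n + 1)) (fun n => A (n + 1)) m y‖ =
      ‖defectMap (prodSeg A 1 (m + 1)) y‖ := by
    rw [← prodSeg_shift]
    exact norm_defectTuple _ (fun j hj => hA (j + 1) (by omega)) y
  rw [isRegularPair_iff_denseRange, ← (Homeomorph.prodComm _ _).denseRange_comp_iff]
  refine (PiLp.consHomeomorph 2 _).denseRange_comp_iff.symm.trans ?_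
  rw [hsplit]
  exact denseRange_prod_comp_iff denseRange_defectMap hnorm

end Chain

end

/-- A factorization `A = A_k ⋯ A_1` into contractions is `k`-regular iff
`A = A_k ∘ (A_{k-1} ⋯ A_1)` is `2`-regular and `A_{k-1} ⋯ A_1` is `(k-1)`-regular, iff
`A = (A_k ⋯ A_2) ∘ A_1` is `2`-regular and `A_k ⋯ A_2` is `(k-1)`-regular. -/
theorem statement3 {H : ℕ → Type*} [∀ n, NormedAddCommGroup (H n)]
    [∀ n, InnerProductSpace ℂ (H n)] [∀ n, CompleteSpace (H n)]
    (k : ℕ) (hk : 2 ≤ k) (A : ∀ n, H n →L[ℂ] H (n + 1))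
    (hA : ∀ i : Fin k, ‖A (i : ℕ)‖ ≤ 1) :
    List.TFAE
      [IsRegularFactorization A k,
       IsRegularPair (A (k - 1)) (prodSeg A 0 (k - 1)) ∧ IsRegularFactorization A (k - 1),
       IsRegularPair (prodSeg A 1 k) (A 0) ∧
         IsRegularFactorization (H := fun n => H (n + 1)) (fun n => A (n + 1)) (k - 1)] := by
  obtain ⟨m, rfl⟩ : ∃ m, k = m + 1 := ⟨k - 1, by omega⟩
  have hA' (j : ℕ) (hj : j < m + 1) : ‖A j‖ ≤ 1 := hA ⟨j, hj⟩
  rw [Nat.add_sub_cancel]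
  tfae_have 1 ↔ 2 := isRegularFactorization_succ_iff_last A hA'
  tfae_have 1 ↔ 3 := isRegularFactorization_succ_iff_first A hA'
  tfae_finish
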